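/- Under Assumption (A), for any families of weighting vectors v_n, w_n ∈ ℝ^{d_n} with sup_n ‖v_n‖₁ < ∞ and sup_n ‖w_n‖₁ < ∞, there exists a constant C (depending on the weighting vectors only through their ℓ1-norms) such that for all n' = 1, 2, …: sup_{n ∈ ℕ} Σ_{k=1}^{n'} Σ_{l=0}^∞ ( f̃_{l,k}^{(n)}(v_n,w_n) )² ≤ C (n')^{1−θ}. -/

import Mathlib

/-!
Assumption (A) bounds `|c_{nj}^{(ν)}|` by `√C₀ (j ∨ 1)^(-3s/4)` with `s = 1 + 2θ/3`, so
`|f_{l,j}| ≤ 2 C₀ ‖v‖₁ ‖w‖₁ j^(-3s/4) (j + l)^(-3s/4)`. Splitting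
`(j + l)^(-3s/4) ≤ (l ∨ 1)^(-s/2) j^(-s/4)` and comparing the tail `∑_{j ≥ k} j^(-s)` with
`∫_k^∞ x^(-s) dx` gives `|f̃_{l,k}| ≲ (l ∨ 1)^(-s/2) k^(1-s)`. After squaring, the sum over `l`
converges because `s > 1`, leaving `k^(-4θ/3)`, whose partial sums up to `n'` are
`O(n'^(1-4θ/3)) ⊆ O(n'^(1-θ))`.
-/

open Finset

noncomputable section

/-- The bilinear coefficient functionals `f_{l,j}^{(n)}(v,w)`. -/
def fCoef (d : ℕ → ℕ) (c : ℕ → ℕ → ℕ → ℝ) (n : ℕ) (v w : ℕ → ℝ) (l j : ℕ) : ℝ :=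
  if l = 0 then
    ∑ ν ∈ Finset.range (d n), ∑ μ ∈ Finset.range (d n), v ν * w μ * (c n ν j * c n μ j)
  else
    ∑ ν ∈ Finset.range (d n), ∑ μ ∈ Finset.range (d n),
      v ν * w μ * (c n ν j * c n μ (j + l) + c n μ j * c n ν (j + l))

/-- `f̃_{l,i}^{(n)}(v,w) = Σ_{j=i}^∞ f_{l,j}^{(n)}(v,w)`. -/
def ftil (d : ℕ → ℕ) (c : ℕ → ℕ → ℕ → ℝ) (n : ℕ) (v w : ℕ → ℝ) (l i : ℕ) : ℝ :=
  ∑' j : ℕ, fCoef d c n v w l (i + j)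

/-- Assumption (A): `sup_n max_{1≤ν≤d_n} |c_{nj}^{(ν)}|² ≤ C₀ (j ∨ 1)^{−3/2−θ}`. -/
def AssumptionA (d : ℕ → ℕ) (c : ℕ → ℕ → ℕ → ℝ) (θ : ℝ) : Prop :=
  ∃ C₀ > (0 : ℝ), ∀ n j : ℕ, ∀ ν < d n,
    (c n ν j) ^ 2 ≤ C₀ * ((max j 1 : ℕ) : ℝ) ^ (-(3 / 2 : ℝ) - θ)

lemma sum_range_add_rpow_neg_le {s x : ℝ} (hs : 1 < s) (hx : 0 < x) (N : ℕ) :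
    ∑ i ∈ range N, (x + ↑(i + 1)) ^ (-s) ≤ x ^ (1 - s) / (s - 1) := by
  have hanti : AntitoneOn (fun y : ℝ => y ^ (-s)) (Set.Icc x (x + N)) :=
    fun a ha b _ hab => Real.rpow_le_rpow_of_nonpos (hx.trans_le ha.1) hab (by linarith)
  refine hanti.sum_le_integral.trans ?_
  have hzero : (0 : ℝ) ∉ Set.uIcc x (x + N) := by
    rw [Set.uIcc_of_le (by simp)]
    exact fun h => hx.not_ge h.1
  rw [integral_rpow (Or.inr ⟨by linarith, hzero⟩), show -s + 1 = -(s - 1) by ring,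
    div_neg, ← neg_div, neg_sub, show -(s - 1) = 1 - s by ring]
  gcongr
  exact sub_le_self _ (by positivity)

lemma summable_nat_add_rpow_neg {s : ℝ} (hs : 1 < s) (k : ℕ) :
    Summable fun j : ℕ => ((k + j : ℕ) : ℝ) ^ (-s) := by
  have := (summable_nat_add_iff k).2 (Real.summable_nat_rpow.2 (by linarith : -s < -1))
  simpa [add_comm] using this

lemma tsum_nat_add_rpow_neg_le {s : ℝ} (hs : 1 < s) {k : ℕ} (hk : 0 < k) :
    ∑' j : ℕ, ((k + j : ℕ) : ℝ) ^ (-s) ≤ s / (s - 1) * (k : ℝ) ^ (1 - s) := by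
  have hk1 : (1 : ℝ) ≤ k := Nat.one_le_cast.2 hk
  have htail : ∑' j : ℕ, ((k + (j + 1) : ℕ) : ℝ) ^ (-s) ≤ (k : ℝ) ^ (1 - s) / (s - 1) :=
    Real.tsum_le_of_sum_range_le (fun _ => by positivity) fun N => by
      simpa using sum_range_add_rpow_neg_le hs (x := k) (by positivity) N
  have hhead : (k : ℝ) ^ (-s) ≤ (k : ℝ) ^ (1 - s) :=
    Real.rpow_le_rpow_of_exponent_le hk1 (by linarith)
  rw [(summable_nat_add_rpow_neg hs k).tsum_eq_zero_add]
  calc _ ≤ (k : ℝ) ^ (1 - s) + (k : ℝ) ^ (1 - s) / (s - 1) :=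
        add_le_add (by simpa using hhead) htail
    _ = s / (s - 1) * (k : ℝ) ^ (1 - s) := by
      field_simp [show s - 1 ≠ 0 by linarith]
      ring

lemma summable_max_one_rpow_neg {s : ℝ} (hs : 1 < s) :
    Summable fun l : ℕ => ((max l 1 : ℕ) : ℝ) ^ (-s) := by
  refine (summable_nat_add_iff 1).1 ((summable_nat_add_rpow_neg hs 1).congr fun l => ?_)
  rw [max_eq_left (by omega), add_comm]

lemma tsum_max_one_rpow_neg_le {s : ℝ} (hs : 1 < s) :
    ∑' l : ℕ, ((max l 1 : ℕ) : ℝ) ^ (-s) ≤ 1 + s / (s - 1) := by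
  have htail := tsum_nat_add_rpow_neg_le hs one_pos
  rw [Nat.cast_one, Real.one_rpow, mul_one] at htail
  rw [(summable_max_one_rpow_neg hs).tsum_eq_zero_add]
  simpa [add_comm] using htail

lemma sum_Icc_rpow_neg_le {a : ℝ} (ha0 : 0 ≤ a) (ha1 : a < 1) (n : ℕ) :
    ∑ k ∈ Icc 1 n, (k : ℝ) ^ (-a) ≤ (n : ℝ) ^ (1 - a) / (1 - a) := by
  rcases n with _ | m
  · simp [Real.zero_rpow (by linarith : 1 - a ≠ 0)]
  have hanti : AntitoneOn (fun y : ℝ => y ^ (-a)) (Set.Icc 1 (1 + m)) :=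
    fun x hx y _ hxy => Real.rpow_le_rpow_of_nonpos (by linarith [hx.1]) hxy (by linarith)
  have hint := hanti.sum_le_integral
  rw [integral_rpow (Or.inl (by linarith)), show -a + 1 = 1 - a by ring] at hint
  have hsplit : ∑ k ∈ Icc 1 (m + 1), (k : ℝ) ^ (-a)
      = 1 + ∑ i ∈ range m, (1 + ↑(i + 1) : ℝ) ^ (-a) := by
    rw [← Ico_add_one_right_eq_Icc, sum_Ico_eq_sum_range, Nat.add_sub_cancel,
      sum_range_succ']
    push_cast
    simp [add_comm]
  rw [hsplit, Nat.cast_succ, add_comm (m : ℝ)]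
  have hinv : 1 ≤ 1 / (1 - a) := by rw [le_div_iff₀ (by linarith)]; linarith
  rw [Real.one_rpow] at hint
  calc _ ≤ 1 + ((1 + m : ℝ) ^ (1 - a) - 1) / (1 - a) := by linarith
    _ ≤ _ := by rw [sub_div]; linarith

lemma rpow_neg_add_le_mul_rpow_neg {x y z p q : ℝ} (hy : 0 < y) (hz : 0 < z) (hyx : y ≤ x)
    (hzx : z ≤ x) (hp : 0 ≤ p) (hq : 0 ≤ q) : x ^ (-(p + q)) ≤ y ^ (-p) * z ^ (-q) := by
  rw [neg_add, Real.rpow_add (hy.trans_le hyx)]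
  exact mul_le_mul (Real.rpow_le_rpow_of_nonpos hy hyx (neg_nonpos.2 hp))
    (Real.rpow_le_rpow_of_nonpos hz hzx (neg_nonpos.2 hq)) (Real.rpow_nonneg (hz.le.trans hzx) _)
    (Real.rpow_nonneg hy.le _)

lemma rpow_neg_mul_rpow_neg_add_le {s : ℝ} (hs : 0 ≤ s) {m : ℕ} (hm : 0 < m) (l : ℕ) :
    (m : ℝ) ^ (-(3 * s / 4)) * ((m + l : ℕ) : ℝ) ^ (-(3 * s / 4))
      ≤ ((max l 1 : ℕ) : ℝ) ^ (-(s / 2)) * (m : ℝ) ^ (-s) := by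
  have hm0 : (0 : ℝ) < m := Nat.cast_pos.2 hm
  have hsplit := rpow_neg_add_le_mul_rpow_neg (x := ((m + l : ℕ) : ℝ)) (y := ((max l 1 : ℕ) : ℝ))
    (Nat.cast_pos.2 (lt_max_of_lt_right one_pos)) hm0 (by gcongr; omega) (by gcongr; omega)
    (by positivity : 0 ≤ s / 2) (by positivity : 0 ≤ s / 4)
  rw [show s / 2 + s / 4 = 3 * s / 4 by ring] at hsplit
  calc _ ≤ (m : ℝ) ^ (-(3 * s / 4)) *
        (((max l 1 : ℕ) : ℝ) ^ (-(s / 2)) * (m : ℝ) ^ (-(s / 4))) := by gcongr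
    _ = ((max l 1 : ℕ) : ℝ) ^ (-(s / 2)) * (m : ℝ) ^ (-(3 * s / 4) + -(s / 4)) := by
        rw [Real.rpow_add hm0]; ring
    _ = _ := by ring_nf

lemma abs_le_sqrt_mul_rpow_half {x C y e : ℝ} (hy : 0 ≤ y) (h : x ^ 2 ≤ C * y ^ e) :
    |x| ≤ √C * y ^ (e / 2) := by
  refine (Real.abs_le_sqrt h).trans_eq ?_
  rw [Real.sqrt_mul' _ (by positivity), Real.sqrt_eq_rpow (y ^ e), ← Real.rpow_mul hy]
  ring_nf

lemma tsum_sq_le_of_abs_le {x : ℕ → ℝ} {B s : ℝ} (hs : 1 < s)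
    (hx : ∀ l, |x l| ≤ B * ((max l 1 : ℕ) : ℝ) ^ (-(s / 2))) :
    ∑' l, x l ^ 2 ≤ B ^ 2 * (1 + s / (s - 1)) := by
  have hsq : ∀ l, x l ^ 2 ≤ B ^ 2 * ((max l 1 : ℕ) : ℝ) ^ (-s) := fun l =>
    calc x l ^ 2 = |x l| ^ 2 := (sq_abs _).symm
      _ ≤ (B * ((max l 1 : ℕ) : ℝ) ^ (-(s / 2))) ^ 2 := pow_le_pow_left₀ (abs_nonneg _) (hx l) 2
      _ = _ := by
        rw [mul_pow, ← Real.rpow_mul_natCast (Nat.cast_nonneg _)]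
        norm_num
  have hsum := (summable_max_one_rpow_neg hs).mul_left (B ^ 2)
  calc ∑' l, x l ^ 2 ≤ ∑' l, B ^ 2 * ((max l 1 : ℕ) : ℝ) ^ (-s) :=
        (hsum.of_nonneg_of_le (fun _ => sq_nonneg _) hsq).tsum_le_tsum hsq hsum
    _ = B ^ 2 * ∑' l, ((max l 1 : ℕ) : ℝ) ^ (-s) := tsum_mul_left
    _ ≤ _ := by gcongr; exact tsum_max_one_rpow_neg_le hs

lemma abs_sum_sum_mul_mul_le {ι : Type*} (s : Finset ι) (v w : ι → ℝ) (Z : ι → ι → ℝ) {B : ℝ}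
    (hZ : ∀ ν ∈ s, ∀ μ ∈ s, |Z ν μ| ≤ B) :
    |∑ ν ∈ s, ∑ μ ∈ s, v ν * w μ * Z ν μ| ≤ (∑ ν ∈ s, |v ν|) * (∑ μ ∈ s, |w μ|) * B := by
  rw [sum_mul_sum, sum_mul]
  refine (abs_sum_le_sum_abs _ _).trans (sum_le_sum fun ν hν => ?_)
  rw [sum_mul]
  refine (abs_sum_le_sum_abs _ _).trans (sum_le_sum fun μ hμ => ?_)
  rw [abs_mul, abs_mul]
  exact mul_le_mul_of_nonneg_left (hZ ν hν μ hμ) (by positivity)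

section Coefficients

variable {d : ℕ → ℕ} {c : ℕ → ℕ → ℕ → ℝ} {n : ℕ} {v w : ℕ → ℝ}

lemma abs_fCoef_le {a : ℕ → ℝ} (hc : ∀ j, ∀ ν < d n, |c n ν j| ≤ a j) (l j : ℕ) :
    |fCoef d c n v w l j|
      ≤ (∑ ν ∈ range (d n), |v ν|) * (∑ μ ∈ range (d n), |w μ|) * (2 * (a j * a (j + l))) := by
  have hprod : ∀ ν ∈ range (d n), ∀ μ ∈ range (d n), ∀ j',
      |c n ν j * c n μ j'| ≤ a j * a j' := fun ν hν μ hμ j' => by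
    have hν' := hc j ν (mem_range.1 hν)
    rw [abs_mul]
    exact mul_le_mul hν' (hc j' μ (mem_range.1 hμ)) (abs_nonneg _) ((abs_nonneg _).trans hν')
  unfold fCoef
  split_ifs with hl
  · subst hl
    refine abs_sum_sum_mul_mul_le _ _ _ _ fun ν hν μ hμ => (hprod ν hν μ hμ j).trans ?_
    rw [add_zero]
    linarith [mul_self_nonneg (a j)]
  · refine abs_sum_sum_mul_mul_le _ _ _ _ fun ν hν μ hμ => ?_
    calc _ ≤ |c n ν j * c n μ (j + l)| + |c n μ j * c n ν (j + l)| := abs_add_le _ _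
      _ ≤ a j * a (j + l) + a j * a (j + l) :=
        add_le_add (hprod ν hν μ hμ _) (hprod μ hμ ν hν _)
      _ = _ := by ring

lemma abs_ftil_le {A V W s : ℝ} (hA : 0 ≤ A) (hs : 1 < s)
    (hc : ∀ j, ∀ ν < d n, |c n ν j| ≤ A * ((max j 1 : ℕ) : ℝ) ^ (-(3 * s / 4)))
    (hv : ∑ ν ∈ range (d n), |v ν| ≤ V) (hw : ∑ ν ∈ range (d n), |w ν| ≤ W)
    {k : ℕ} (hk : 0 < k) (l : ℕ) :
    |ftil d c n v w l k|
      ≤ 2 * A ^ 2 * V * W * (s / (s - 1)) * (k : ℝ) ^ (1 - s) *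
        ((max l 1 : ℕ) : ℝ) ^ (-(s / 2)) := by
  have hV : 0 ≤ V := (sum_nonneg fun _ _ => abs_nonneg _).trans hv
  have hW : 0 ≤ W := (sum_nonneg fun _ _ => abs_nonneg _).trans hw
  set B := 2 * A ^ 2 * V * W * ((max l 1 : ℕ) : ℝ) ^ (-(s / 2)) with hB
  have hterm : ∀ j, |fCoef d c n v w l (k + j)| ≤ B * ((k + j : ℕ) : ℝ) ^ (-s) := by
    intro j
    refine (abs_fCoef_le hc l (k + j)).trans ?_
    rw [max_eq_left (by omega : 1 ≤ k + j), max_eq_left (by omega : 1 ≤ k + j + l)]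
    calc _ ≤ V * W * (2 * (A * ((k + j : ℕ) : ℝ) ^ (-(3 * s / 4)) *
          (A * ((k + j + l : ℕ) : ℝ) ^ (-(3 * s / 4))))) := by gcongr
      _ = 2 * A ^ 2 * V * W * (((k + j : ℕ) : ℝ) ^ (-(3 * s / 4)) *
          ((k + j + l : ℕ) : ℝ) ^ (-(3 * s / 4))) := by ring
      _ ≤ _ := by
        grw [rpow_neg_mul_rpow_neg_add_le (by linarith) (by omega : 0 < k + j) l]
        exact le_of_eq (by rw [hB]; ring)
  have hsum := (summable_nat_add_rpow_neg hs k).mul_left B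
  calc |ftil d c n v w l k| = ‖∑' j, fCoef d c n v w l (k + j)‖ := (Real.norm_eq_abs _).symm
    _ ≤ ∑' j, B * ((k + j : ℕ) : ℝ) ^ (-s) :=
        tsum_of_norm_bounded hsum.hasSum fun j => (Real.norm_eq_abs _).trans_le (hterm j)
    _ = B * ∑' j, ((k + j : ℕ) : ℝ) ^ (-s) := tsum_mul_left
    _ ≤ B * (s / (s - 1) * (k : ℝ) ^ (1 - s)) := by
        gcongr
        exact tsum_nat_add_rpow_neg_le hs hk
    _ = _ := by ring

lemma tsum_sq_ftil_le {A V W s : ℝ} (hA : 0 ≤ A) (hs : 1 < s)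
    (hc : ∀ j, ∀ ν < d n, |c n ν j| ≤ A * ((max j 1 : ℕ) : ℝ) ^ (-(3 * s / 4)))
    (hv : ∑ ν ∈ range (d n), |v ν| ≤ V) (hw : ∑ ν ∈ range (d n), |w ν| ≤ W)
    {k : ℕ} (hk : 0 < k) :
    ∑' l, ftil d c n v w l k ^ 2
      ≤ (2 * A ^ 2 * V * W * (s / (s - 1))) ^ 2 * (1 + s / (s - 1)) *
        (k : ℝ) ^ (-(2 * (s - 1))) := by
  refine (tsum_sq_le_of_abs_le hs (abs_ftil_le hA hs hc hv hw hk)).trans_eq ?_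
  rw [mul_pow _ ((k : ℝ) ^ (1 - s)), ← Real.rpow_mul_natCast (Nat.cast_nonneg _)]
  ring_nf

end Coefficients

/-- bound (Ass3) of the technical lemma. -/
theorem stmt2 (d : ℕ → ℕ) (c : ℕ → ℕ → ℕ → ℝ) (θ : ℝ) (hθ0 : 0 < θ) (hθ : θ < 1 / 2)
    (hA : AssumptionA d c θ) (v w : ℕ → ℕ → ℝ) (Kv Kw : ℝ)
    (hv : ∀ n, ∑ ν ∈ Finset.range (d n), |v n ν| ≤ Kv)
    (hw : ∀ n, ∑ ν ∈ Finset.range (d n), |w n ν| ≤ Kw) :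
    ∃ C : ℝ, ∀ n n' : ℕ, 1 ≤ n' →
      ∑ k ∈ Finset.Icc 1 n', ∑' l : ℕ,
        (ftil d c n (v n) (w n) l k) ^ 2
        ≤ C * (n' : ℝ) ^ ((1 : ℝ) - θ) := by
  obtain ⟨C₀, -, hc⟩ := hA
  set s : ℝ := 1 + 2 * θ / 3 with hs_def
  have hs : 1 < s := by linarith
  have henv : ∀ n j, ∀ ν < d n, |c n ν j| ≤ √C₀ * ((max j 1 : ℕ) : ℝ) ^ (-(3 * s / 4)) :=
    fun n j ν hν => (abs_le_sqrt_mul_rpow_half (Nat.cast_nonneg _) (hc n j ν hν)).trans_eq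
      (by rw [hs_def]; ring_nf)
  set K := (2 * √C₀ ^ 2 * Kv * Kw * (s / (s - 1))) ^ 2 * (1 + s / (s - 1))
  have hK : 0 ≤ K := by
    have : 0 < s - 1 := by linarith
    positivity
  have ha1 : 0 < 1 - 2 * (s - 1) := by linarith
  refine ⟨K / (1 - 2 * (s - 1)), fun n n' hn' => ?_⟩
  calc ∑ k ∈ Icc 1 n', ∑' l, ftil d c n (v n) (w n) l k ^ 2
      ≤ ∑ k ∈ Icc 1 n', K * (k : ℝ) ^ (-(2 * (s - 1))) := sum_le_sum fun k hk =>
        tsum_sq_ftil_le (Real.sqrt_nonneg _) hs (henv n) (hv n) (hw n) (mem_Icc.1 hk).1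
    _ = K * ∑ k ∈ Icc 1 n', (k : ℝ) ^ (-(2 * (s - 1))) := (mul_sum _ _ _).symm
    _ ≤ K * ((n' : ℝ) ^ (1 - 2 * (s - 1)) / (1 - 2 * (s - 1))) := by
        gcongr
        exact sum_Icc_rpow_neg_le (by linarith) (by linarith) n'
    _ ≤ K * ((n' : ℝ) ^ (1 - θ) / (1 - 2 * (s - 1))) := by
        gcongr
        · exact Nat.one_le_cast.2 hn'
        · linarith
    _ = K / (1 - 2 * (s - 1)) * (n' : ℝ) ^ (1 - θ) := by ring

end
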